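/- arXiv:2112.11073 — 2 statements merged into one kernel-verified Lean document; each statement's English description precedes it below -/
import Mathlib

section
/- Let 𝔤₀ be a real semisimple Lie algebra with Cartan involution θ, Cartan decomposition 𝔤₀ = 𝔨₀ ⊕ 𝔭₀, Iwasawa decomposition data 𝔞₀, 𝔫₀ and restricted root system Σ with positive system Σ⁺. Let B be a positive multiple of the Killing form, and let X₁,…,X_d be a basis of 𝔭₀ ∩ (𝔨₀ ⊕ 𝔫₀) with B-dual basis X̃₁,…,X̃_d. Then ∑_j [X̃_j, κ(X_j)] lies in 𝔞₀ and B(∑_j [X̃_j, κ(X_j)], H) = 2ρ(H) for all H ∈ 𝔞₀, where κ(X) denotes the 𝔨₀-component of X in the decomposition 𝔤₀ = 𝔨₀ ⊕ 𝔞₀ ⊕ 𝔫₀ and ρ = ½∑_{α∈Σ⁺} dim(𝔤^α)·α. -/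
/-!
Write `V = 𝔭 ∩ (𝔨 ⊕ 𝔫)`. The map `E x = x - θ x` is a bijection `𝔫 → V` with `κ (E x) = -(x + θ x)`,
so `P x y = B (E x) (E y)` is a symmetric form, nondegenerate on `𝔫`, for which distinct root
spaces are orthogonal. A sum `∑ F (x̃ᵢ) (xᵢ)` over a pair of dual families does not depend on the
pair, so we may replace `(X, X̃)` by `(E nᵢ, E mᵢ)`, where `nᵢ` runs through bases of the root
spaces `𝔤^α` and `mᵢ` through their `P`-dual bases. For `n, m ∈ 𝔤^α` and `H ∈ 𝔞`,
`B ([E m, κ (E n)], H) = α(H) · P m n`, which sums to `∑ dim 𝔤^α · α(H)`. Moreover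
`[E m, κ (E n)] = θ [m, n] - [m, n] - ([m, θ n] - [θ m, n])`: the last bracket is `θ`-anti-invariant
of weight `α - α = 0`, hence lies in `𝔞`, and `∑ᵢ [mᵢ, nᵢ] = 0` since the bracket is antisymmetric
while the sum is unchanged when the dual families are swapped.
-/

open Submodule Set Finset Module

def restrictedRootSpace (L : Type) [LieRing L] [LieAlgebra ℝ L] (𝔞 : Submodule ℝ L)
    (α : ↥𝔞 →ₗ[ℝ] ℝ) : Submodule ℝ L where
  carrier := {x : L | ∀ H : ↥𝔞, ⁅(H : L), x⁆ = α H • x}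
  add_mem' := fun ha hb => by
    intro H
    rw [lie_add, ha H, hb H, smul_add]
  zero_mem' := by intro H; simp
  smul_mem' := fun c x hx => by
    intro H
    rw [lie_smul, hx H, smul_comm]

section DualFamilies

variable {R M N ι ι' : Type*} [CommRing R] [AddCommGroup M] [Module R M] [AddCommGroup N]
  [Module R N] [Fintype ι] [DecidableEq ι] [Fintype ι'] [DecidableEq ι']
  {B : LinearMap.BilinForm R M} {x xt : ι → M}

theorem eq_sum_smul_of_dual (hdual : ∀ i j, B (xt i) (x j) = if i = j then 1 else 0) {v : M}
    (hv : v ∈ span R (range x)) : v = ∑ i, B (xt i) v • x i := by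
  obtain ⟨c, rfl⟩ := (mem_span_range_iff_exists_fun R).1 hv
  simp [map_sum, hdual]

theorem eq_sum_smul_dual_of_dual (hB : B.IsSymm) (hxt : ∀ i, xt i ∈ span R (range x))
    (hdual : ∀ i j, B (xt i) (x j) = if i = j then 1 else 0) {w : M}
    (hw : w ∈ span R (range x)) : w = ∑ i, B w (x i) • xt i := by
  set u := w - ∑ i, B w (x i) • xt i
  have hu : u ∈ span R (range x) := sub_mem hw (sum_mem fun i _ => smul_mem _ _ (hxt i))
  have hux : ∀ j, B u (x j) = 0 := fun j => by simp [u, hdual]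
  have huxt : ∀ i, B (xt i) u = 0 := fun i => by
    rw [hB.eq, eq_sum_smul_of_dual hdual (hxt i)]
    simp [hux]
  rw [← sub_eq_zero]
  change u = 0
  rw [eq_sum_smul_of_dual hdual hu]
  simp [huxt]

theorem eq_zero_of_forall_apply_eq_zero_of_dual (hB : B.IsSymm)
    (hxt : ∀ i, xt i ∈ span R (range x))
    (hdual : ∀ i j, B (xt i) (x j) = if i = j then 1 else 0) {v : M}
    (hv : v ∈ span R (range x)) (h : ∀ w ∈ span R (range x), B v w = 0) : v = 0 := by
  rw [eq_sum_smul_of_dual hdual hv]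
  simp [hB.eq _ v, h _ (hxt _)]

theorem span_range_eq_of_dual (hB : B.IsSymm) (hxt : ∀ i, xt i ∈ span R (range x))
    (hdual : ∀ i j, B (xt i) (x j) = if i = j then 1 else 0) :
    span R (range xt) = span R (range x) := by
  refine le_antisymm (span_le.2 <| range_subset_iff.2 hxt) (span_le.2 ?_)
  rintro _ ⟨i, rfl⟩
  rw [eq_sum_smul_dual_of_dual hB hxt hdual (subset_span ⟨i, rfl⟩)]
  exact sum_mem fun j _ => smul_mem _ _ (subset_span ⟨j, rfl⟩)

theorem sum_apply_dual_eq_sum_apply_dual (hB : B.IsSymm) (F : M →ₗ[R] M →ₗ[R] N)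
    {y yt : ι' → M} (hxy : span R (range x) = span R (range y))
    (hxt : ∀ i, xt i ∈ span R (range x)) (hyt : ∀ k, yt k ∈ span R (range y))
    (hx : ∀ i j, B (xt i) (x j) = if i = j then 1 else 0)
    (hy : ∀ k l, B (yt k) (y l) = if k = l then 1 else 0) :
    ∑ i, F (xt i) (x i) = ∑ k, F (yt k) (y k) :=
  calc ∑ i, F (xt i) (x i) = ∑ i, ∑ k, B (yt k) (x i) • F (xt i) (y k) := by
        refine sum_congr rfl fun i _ => ?_
        conv_lhs => rw [eq_sum_smul_of_dual hy (hxy ▸ subset_span ⟨i, rfl⟩ : x i ∈ _)]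
        simp [map_sum]
    _ = ∑ k, F (∑ i, B (yt k) (x i) • xt i) (y k) := by
        rw [sum_comm]
        simp [map_sum]
    _ = ∑ k, F (yt k) (y k) := by
        refine sum_congr rfl fun k _ => ?_
        rw [← eq_sum_smul_dual_of_dual hB hxt hx (hxy ▸ hyt k)]

theorem sum_apply_dual_eq_zero_of_antisymm [IsAddTorsionFree N] (hB : B.IsSymm)
    (F : M →ₗ[R] M →ₗ[R] N) (hF : ∀ a b, F a b = -F b a)
    (hxt : ∀ i, xt i ∈ span R (range x))
    (hdual : ∀ i j, B (xt i) (x j) = if i = j then 1 else 0) :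
    ∑ i, F (xt i) (x i) = 0 := by
  have hspan := span_range_eq_of_dual hB hxt hdual
  have hswap : ∑ i, F (xt i) (x i) = ∑ i, F (x i) (xt i) :=
    sum_apply_dual_eq_sum_apply_dual hB F hspan.symm hxt (fun i => hspan ▸ subset_span ⟨i, rfl⟩)
      hdual fun i j => by rw [hB.eq, hdual]; exact if_congr eq_comm rfl rfl
  rw [← self_eq_neg, ← sum_neg_distrib]
  nth_rewrite 1 [hswap]
  exact sum_congr rfl fun i _ => hF _ _

end DualFamilies

theorem exists_dual_families_of_pairwise_orthogonal {K M ι : Type*} [Field K] [AddCommGroup M]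
    [Module K M] [Fintype ι] [DecidableEq ι] {B : LinearMap.BilinForm K M} (hB : B.IsSymm)
    (W : ι → Submodule K M) [∀ i, FiniteDimensional K (W i)]
    (horth : Pairwise fun i j => ∀ x ∈ W i, ∀ y ∈ W j, B x y = 0)
    (hnd : ∀ x ∈ ⨆ i, W i, (∀ y ∈ ⨆ i, W i, B x y = 0) → x = 0) :
    ∃ n m : (Σ i, Fin (finrank K (W i))) → M, (∀ k, n k ∈ W k.1) ∧ (∀ k, m k ∈ W k.1) ∧
      span K (range n) = ⨆ i, W i ∧ ∀ k l, B (m k) (n l) = if k = l then 1 else 0 := by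
  have hWnd : ∀ i, (B.restrict (W i)).Nondegenerate := fun i =>
    ((hB.restrict (W i)).isRefl.nondegenerate_iff_separatingLeft).2 fun x hx => by
      have hker : ⨆ j, W j ≤ LinearMap.ker (B x) := iSup_le fun j y hy => by
        obtain rfl | hij := eq_or_ne i j
        · exact hx ⟨y, hy⟩
        · exact horth hij x x.2 y hy
      exact Subtype.ext <| hnd x (mem_iSup_of_mem i x.2) fun y hy => hker hy
  let b i := finBasis K (W i)
  let d i := (B.restrict (W i)).dualBasis (hWnd i) (b i)
  refine ⟨fun k => b k.1 k.2, fun k => d k.1 k.2, fun k => (b k.1 k.2).2, fun k => (d k.1 k.2).2,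
    ?_, ?_⟩
  · rw [range_sigma_eq_iUnion_range, span_iUnion]
    refine iSup_congr fun i => ?_
    rw [show (range fun a => ((b i a : W i) : M)) = (W i).subtype '' range (b i) from
      (range_comp _ _), span_image, (b i).span_eq, Submodule.map_top, range_subtype]
  · rintro ⟨i, a⟩ ⟨j, c⟩
    obtain rfl | hij := eq_or_ne i j
    · have := (B.restrict (W i)).apply_dualBasis_left (hWnd i) (b i) a c
      simp only [LinearMap.BilinForm.restrict_apply, LinearMap.domRestrict_apply] at this
      simp [d, this, eq_comm]
    · rw [horth hij _ (d i a).2 _ (b j c).2, if_neg fun h => hij (congrArg Sigma.fst h)]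

section RestrictedRootSpace

variable {L : Type} [LieRing L] [LieAlgebra ℝ L] {𝔞 : Submodule ℝ L} {α β : ↥𝔞 →ₗ[ℝ] ℝ}
  {x y : L}

theorem lie_mem_restrictedRootSpace_add (hx : x ∈ restrictedRootSpace L 𝔞 α)
    (hy : y ∈ restrictedRootSpace L 𝔞 β) : ⁅x, y⁆ ∈ restrictedRootSpace L 𝔞 (α + β) := fun H => by
  rw [leibniz_lie, hx H, hy H, smul_lie, lie_smul, LinearMap.add_apply, add_smul, add_comm]

theorem map_mem_restrictedRootSpace_neg (θ : L →ₗ⁅ℝ⁆ L) (hθ : ∀ H ∈ 𝔞, θ H = -H)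
    (hx : x ∈ restrictedRootSpace L 𝔞 α) : θ x ∈ restrictedRootSpace L 𝔞 (-α) := fun H => by
  rw [show (H : L) = -θ H by rw [hθ H H.2, neg_neg], neg_lie, ← LieHom.map_lie, hx H,
    map_smul, LinearMap.neg_apply, neg_smul]

theorem apply_eq_zero_of_mem_restrictedRootSpace {B : LinearMap.BilinForm ℝ L}
    (hBinv : ∀ x y z, B ⁅x, y⁆ z = B x ⁅y, z⁆) (hαβ : α + β ≠ 0)
    (hx : x ∈ restrictedRootSpace L 𝔞 α) (hy : y ∈ restrictedRootSpace L 𝔞 β) : B x y = 0 := by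
  obtain ⟨H, hH⟩ := DFunLike.ne_iff.1 hαβ
  have h : α H * B x y = -(β H * B x y) := by
    rw [← smul_eq_mul, ← LinearMap.smul_apply, ← map_smul, ← hx H, ← lie_skew, map_neg,
      LinearMap.neg_apply, hBinv, hy H, map_smul, smul_eq_mul]
  refine (mul_eq_zero.1 ?_).resolve_left hH
  rw [LinearMap.add_apply]
  linear_combination h

theorem eq_zero_of_mem_restrictedRootSpace_of_apply_eq_neg (θ : L →ₗ⁅ℝ⁆ L)
    (hθ : ∀ H ∈ 𝔞, θ H = -H) (hα : α ≠ 0) (hx : x ∈ restrictedRootSpace L 𝔞 α) (hθx : θ x = -x) :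
    x = 0 := by
  obtain ⟨H, hH⟩ := DFunLike.ne_iff.1 hα
  have h : θ ⁅(H : L), x⁆ = ⁅(H : L), x⁆ := by
    rw [LieHom.map_lie, hθ H H.2, hθx, neg_lie, lie_neg, neg_neg]
  rw [hx H, map_smul, hθx, smul_neg, eq_comm] at h
  have := IsAddTorsionFree.of_isTorsionFree ℝ L
  exact (smul_eq_zero.1 (self_eq_neg.1 h)).resolve_left hH

theorem restrictedRootSpace_eq_bot_of_neg_le (θ : L →ₗ⁅ℝ⁆ L) (hθ : ∀ x, θ (θ x) = x)
    (hθ𝔞 : ∀ H ∈ 𝔞, θ H = -H) {𝔫 : Submodule ℝ L} (h𝔫θ : ∀ x ∈ 𝔫, θ x = x → x = 0) (hα : α ≠ 0)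
    (hα𝔫 : restrictedRootSpace L 𝔞 α ≤ 𝔫) (hnegα𝔫 : restrictedRootSpace L 𝔞 (-α) ≤ 𝔫) :
    restrictedRootSpace L 𝔞 α = ⊥ := by
  refine eq_bot_iff.2 fun x hx => ?_
  have hsum : x + θ x = 0 := h𝔫θ _ (add_mem (hα𝔫 hx)
    (hnegα𝔫 (map_mem_restrictedRootSpace_neg θ hθ𝔞 hx))) (by rw [map_add, hθ, add_comm])
  exact eq_zero_of_mem_restrictedRootSpace_of_apply_eq_neg θ hθ𝔞 hα hx
    (eq_neg_of_add_eq_zero_right hsum)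

theorem apply_sub_eq_zero_of_mem_restrictedRootSpace {B : LinearMap.BilinForm ℝ L}
    (hBinv : ∀ x y z, B ⁅x, y⁆ z = B x ⁅y, z⁆) (θ : L →ₗ⁅ℝ⁆ L) (hBθ : ∀ x y, B (θ x) (θ y) = B x y)
    (hθ𝔞 : ∀ H ∈ 𝔞, θ H = -H) (hαβ : α ≠ β) (hx : x ∈ restrictedRootSpace L 𝔞 α)
    (hy : y ∈ restrictedRootSpace L 𝔞 β) (hxy : B x y = 0) : B (x - θ x) (y - θ y) = 0 := by
  have hxθy : B x (θ y) = 0 := apply_eq_zero_of_mem_restrictedRootSpace hBinv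
    (fun h => hαβ (by linear_combination (norm := module) h)) hx
    (map_mem_restrictedRootSpace_neg θ hθ𝔞 hy)
  have hθxy : B (θ x) y = 0 := apply_eq_zero_of_mem_restrictedRootSpace hBinv
    (fun h => hαβ (by linear_combination (norm := module) -h))
    (map_mem_restrictedRootSpace_neg θ hθ𝔞 hx) hy
  simp [hBθ, hxy, hxθy, hθxy]

end RestrictedRootSpace

theorem killingForm_apply_apply_of_involutive {R L : Type*} [CommRing R] [LieRing L]
    [LieAlgebra R L] (θ : L →ₗ⁅R⁆ L) (hθ : ∀ x, θ (θ x) = x) (x y : L) :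
    killingForm R L (θ x) (θ y) = killingForm R L x y :=
  LieAlgebra.killingForm_of_equiv_apply ⟨θ, θ, hθ, hθ⟩ x y

section Iwasawa

variable {L : Type} [LieRing L] [LieAlgebra ℝ L] (θ : L →ₗ⁅ℝ⁆ L) {𝔨 𝔭 𝔫 : Submodule ℝ L}
  {B : LinearMap.BilinForm ℝ L} {ι ι' : Type*} [Fintype ι] [DecidableEq ι] [Fintype ι']
  [DecidableEq ι'] {x : L}

theorem map_id_sub_eq_inf_sup (hθ : ∀ x, θ (θ x) = x) (h𝔨 : ∀ x, x ∈ 𝔨 ↔ θ x = x)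
    (h𝔭 : ∀ x, x ∈ 𝔭 ↔ θ x = -x) (𝔫 : Submodule ℝ L) :
    𝔫.map (LinearMap.id - θ.toLinearMap) = 𝔭 ⊓ (𝔨 ⊔ 𝔫) := by
  apply le_antisymm
  · rintro _ ⟨x, hx, rfl⟩
    refine ⟨(h𝔭 _).2 (by simp [hθ]), mem_sup.2 ⟨-(x + θ x), (h𝔨 _).2 (by simp [hθ, add_comm]),
      (2 : ℝ) • x, smul_mem _ _ hx, by simp only [LinearMap.sub_apply]; module⟩⟩
  · rintro v ⟨hv𝔭, hv⟩
    obtain ⟨k, hk, n, hn, rfl⟩ := mem_sup.1 hv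
    have hθn : θ n = -(2 : ℝ) • k - n := by
      have := (h𝔭 _).1 hv𝔭
      rw [map_add, (h𝔨 k).1 hk] at this
      linear_combination (norm := module) this
    refine ⟨(1 / 2 : ℝ) • n, smul_mem _ _ hn, ?_⟩
    simp only [LinearMap.sub_apply, LinearMap.id_apply, LieHom.coe_toLinearMap, map_smul, hθn]
    module

theorem apply_sub_eq_neg_add_of_mem (hθ : ∀ x, θ (θ x) = x) (h𝔨 : ∀ x, x ∈ 𝔨 ↔ θ x = x)
    {𝔪 : Submodule ℝ L} (h𝔨𝔪 : ∀ x ∈ 𝔨, x ∈ 𝔪 → x = 0) (κ : L →ₗ[ℝ] L) (hκ𝔨 : ∀ x, κ x ∈ 𝔨)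
    (hκ𝔪 : ∀ x, x - κ x ∈ 𝔪) (hx : x ∈ 𝔪) : κ (x - θ x) = -(x + θ x) := by
  have hk : -(x + θ x) ∈ 𝔨 := (h𝔨 _).2 (by simp [hθ, add_comm])
  have h : κ (x - θ x) - -(x + θ x) = (2 : ℝ) • x - (x - θ x - κ (x - θ x)) := by module
  exact sub_eq_zero.1 <| h𝔨𝔪 _ (sub_mem (hκ𝔨 _) hk) (h ▸ sub_mem (smul_mem _ _ hx) (hκ𝔪 _))

theorem eq_zero_of_forall_apply_sub_eq_zero (hθ : ∀ x, θ (θ x) = x) (h𝔨 : ∀ x, x ∈ 𝔨 ↔ θ x = x)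
    (h𝔭 : ∀ x, x ∈ 𝔭 ↔ θ x = -x) (h𝔫θ : ∀ x ∈ 𝔫, θ x = x → x = 0) (hB : B.IsSymm)
    {X Xt : ι → L} (hXspan : span ℝ (range X) = 𝔭 ⊓ (𝔨 ⊔ 𝔫))
    (hXt : ∀ i, Xt i ∈ span ℝ (range X)) (hdual : ∀ i j, B (Xt i) (X j) = if i = j then 1 else 0)
    (hx : x ∈ 𝔫) (h : ∀ y ∈ 𝔫, B (x - θ x) (y - θ y) = 0) : x = 0 := by
  have hV := map_id_sub_eq_inf_sup θ hθ h𝔨 h𝔭 𝔫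
  refine h𝔫θ x hx (sub_eq_zero.1 ?_).symm
  refine eq_zero_of_forall_apply_eq_zero_of_dual hB hXt hdual
    (hXspan ▸ hV ▸ mem_map_of_mem hx) ?_
  rw [hXspan, ← hV]
  rintro _ ⟨y, hy, rfl⟩
  exact h y hy

theorem sum_lie_dual_eq_sum_lie_sub (hθ : ∀ x, θ (θ x) = x) (h𝔨 : ∀ x, x ∈ 𝔨 ↔ θ x = x)
    (h𝔭 : ∀ x, x ∈ 𝔭 ↔ θ x = -x) {𝔪 : Submodule ℝ L} (h𝔫𝔪 : 𝔫 ≤ 𝔪)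
    (h𝔨𝔪 : ∀ x ∈ 𝔨, x ∈ 𝔪 → x = 0) (κ : L →ₗ[ℝ] L) (hκ𝔨 : ∀ x, κ x ∈ 𝔨)
    (hκ𝔪 : ∀ x, x - κ x ∈ 𝔪) (hB : B.IsSymm) {X Xt : ι → L}
    (hXspan : span ℝ (range X) = 𝔭 ⊓ (𝔨 ⊔ 𝔫)) (hXt : ∀ i, Xt i ∈ span ℝ (range X))
    (hdual : ∀ i j, B (Xt i) (X j) = if i = j then 1 else 0) {n m : ι' → L}
    (hspan : span ℝ (range n) = 𝔫) (hm : ∀ k, m k ∈ 𝔫)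
    (hdual' : ∀ k l, B (m k - θ (m k)) (n l - θ (n l)) = if k = l then 1 else 0) :
    ∑ i, ⁅Xt i, κ (X i)⁆ = ∑ k, ⁅m k - θ (m k), -(n k + θ (n k))⁆ := by
  have hV := map_id_sub_eq_inf_sup θ hθ h𝔨 h𝔭 𝔫
  have hEn : span ℝ (range fun k => n k - θ (n k)) = 𝔭 ⊓ (𝔨 ⊔ 𝔫) := by
    rw [← hV, ← hspan, ← span_image, ← range_comp]
    rfl
  refine (sum_apply_dual_eq_sum_apply_dual hB (LinearMap.mk₂ ℝ (fun a b => ⁅a, κ b⁆)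
    (fun a₁ a₂ b => add_lie a₁ a₂ (κ b)) (fun t a b => smul_lie t a (κ b))
    (fun a b₁ b₂ => by rw [map_add, lie_add]) (fun t a b => by rw [map_smul, lie_smul]))
    (hXspan.trans hEn.symm) hXt (fun k => hEn ▸ hV ▸ mem_map_of_mem (hm k))
    hdual hdual').trans (sum_congr rfl fun k _ => ?_)
  rw [LinearMap.mk₂_apply, apply_sub_eq_neg_add_of_mem θ hθ h𝔨 h𝔨𝔪 κ hκ𝔨 hκ𝔪
    (h𝔫𝔪 (hspan ▸ subset_span ⟨k, rfl⟩))]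

end Iwasawa

section AdaptedFamilies

variable {L : Type} [LieRing L] [LieAlgebra ℝ L] {𝔞 : Submodule ℝ L} {B : LinearMap.BilinForm ℝ L}
  (θ : L →ₗ⁅ℝ⁆ L) {ι : Type*} [Fintype ι]

theorem isSymm_compl₁₂_id_sub (hB : B.IsSymm) :
    LinearMap.BilinForm.IsSymm
      (B.compl₁₂ (LinearMap.id - θ.toLinearMap) (LinearMap.id - θ.toLinearMap)) :=
  ⟨fun _ _ => hB.eq _ _⟩

theorem sum_lie_sub_neg_add_mem [DecidableEq ι] (hB : B.IsSymm) (hθ : ∀ x, θ (θ x) = x)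
    {𝔭 : Submodule ℝ L} (h𝔭 : ∀ x, x ∈ 𝔭 ↔ θ x = -x) (hθ𝔞 : ∀ H ∈ 𝔞, θ H = -H)
    (h𝔞max : ∀ x ∈ 𝔭, (∀ y ∈ 𝔞, ⁅x, y⁆ = 0) → x ∈ 𝔞) (r : ι → ↥𝔞 →ₗ[ℝ] ℝ) {m n : ι → L}
    (hm : ∀ i, m i ∈ restrictedRootSpace L 𝔞 (r i)) (hn : ∀ i, n i ∈ restrictedRootSpace L 𝔞 (r i))
    (hmn : ∀ i, m i ∈ span ℝ (range n))
    (hdual : ∀ i j, B (m i - θ (m i)) (n j - θ (n j)) = if i = j then 1 else 0) :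
    ∑ i, ⁅m i - θ (m i), -(n i + θ (n i))⁆ ∈ 𝔞 := by
  have hterm : ∀ i, ⁅m i - θ (m i), -(n i + θ (n i))⁆
      = θ ⁅m i, n i⁆ - ⁅m i, n i⁆ - (⁅m i, θ (n i)⁆ - ⁅θ (m i), n i⁆) := fun i => by
    rw [LieHom.map_lie]
    simp only [lie_neg, lie_add, sub_lie]
    abel
  have := IsAddTorsionFree.of_isTorsionFree ℝ L
  have hsum : ∑ i, ⁅m i, n i⁆ = 0 := by
    simpa using sum_apply_dual_eq_zero_of_antisymm (isSymm_compl₁₂_id_sub θ hB)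
      (LinearMap.mk₂ ℝ (fun a b : L => ⁅a, b⁆) add_lie smul_lie lie_add lie_smul)
      (fun a b => (lie_skew a b).symm) hmn hdual
  have hmem : ∀ i, ⁅m i, θ (n i)⁆ - ⁅θ (m i), n i⁆ ∈ 𝔞 := fun i => by
    have h0 : ⁅m i, θ (n i)⁆ - ⁅θ (m i), n i⁆ ∈ restrictedRootSpace L 𝔞 0 := by
      refine sub_mem ?_ ?_
      · simpa using lie_mem_restrictedRootSpace_add (hm i)
          (map_mem_restrictedRootSpace_neg θ hθ𝔞 (hn i))
      · simpa using lie_mem_restrictedRootSpace_add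
          (map_mem_restrictedRootSpace_neg θ hθ𝔞 (hm i)) (hn i)
    refine h𝔞max _ ((h𝔭 _).2 ?_) fun y hy => ?_
    · rw [map_sub, LieHom.map_lie, LieHom.map_lie, hθ, hθ, neg_sub]
    · rw [← lie_skew, h0 ⟨y, hy⟩, LinearMap.zero_apply, zero_smul, neg_zero]
  rw [sum_congr rfl fun i _ => hterm i, sum_sub_distrib, sum_sub_distrib, ← map_sum, hsum,
    map_zero, sub_zero, zero_sub]
  exact neg_mem (sum_mem fun i _ => hmem i)

theorem apply_sum_lie_sub_neg_add (hBinv : ∀ x y z, B ⁅x, y⁆ z = B x ⁅y, z⁆)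
    (hθ𝔞 : ∀ H ∈ 𝔞, θ H = -H) (r : ι → ↥𝔞 →ₗ[ℝ] ℝ) {m n : ι → L}
    (hn : ∀ i, n i ∈ restrictedRootSpace L 𝔞 (r i))
    (hdual : ∀ i, B (m i - θ (m i)) (n i - θ (n i)) = 1) (H : ↥𝔞) :
    B (∑ i, ⁅m i - θ (m i), -(n i + θ (n i))⁆) H = ∑ i, r i H := by
  rw [map_sum, LinearMap.sum_apply]
  refine sum_congr rfl fun i _ => ?_
  have hlie : ⁅-(n i + θ (n i)), (H : L)⁆ = r i H • (n i - θ (n i)) := by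
    rw [← lie_skew, lie_neg, neg_neg, lie_add, hn i H,
      map_mem_restrictedRootSpace_neg θ hθ𝔞 (hn i) H, LinearMap.neg_apply, neg_smul, smul_sub,
      sub_eq_add_neg]
  rw [hBinv, hlie, map_smul, hdual, smul_eq_mul, mul_one]

end AdaptedFamilies

open Classical in
theorem exists_dual_families_restrictedRootSpace {L : Type} [LieRing L] [LieAlgebra ℝ L]
    [Module.Finite ℝ L] {𝔞 𝔫 : Submodule ℝ L} {B : LinearMap.BilinForm ℝ L} (hB : B.IsSymm)
    (hBinv : ∀ x y z, B ⁅x, y⁆ z = B x ⁅y, z⁆) (θ : L →ₗ⁅ℝ⁆ L) (hθ : ∀ x, θ (θ x) = x)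
    (hBθ : ∀ x y, B (θ x) (θ y) = B x y) (hθ𝔞 : ∀ H ∈ 𝔞, θ H = -H)
    (h𝔫θ : ∀ x ∈ 𝔫, θ x = x → x = 0) (Sigmaplus : Finset (↥𝔞 →ₗ[ℝ] ℝ))
    (hroots : ∀ α ∈ Sigmaplus, α ≠ 0) (h𝔫 : 𝔫 = ⨆ α ∈ Sigmaplus, restrictedRootSpace L 𝔞 α)
    (hnd : ∀ x ∈ 𝔫, (∀ y ∈ 𝔫, B (x - θ x) (y - θ y) = 0) → x = 0) :
    ∃ n m : (Σ α : Sigmaplus, Fin (finrank ℝ (restrictedRootSpace L 𝔞 α))) → L,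
      (∀ k, n k ∈ restrictedRootSpace L 𝔞 k.1) ∧ (∀ k, m k ∈ restrictedRootSpace L 𝔞 k.1) ∧
      span ℝ (range n) = 𝔫 ∧ ∀ k l, B (m k - θ (m k)) (n l - θ (n l)) = if k = l then 1 else 0 := by
  have h𝔫' : 𝔫 = ⨆ α : Sigmaplus, restrictedRootSpace L 𝔞 α := by rw [h𝔫, iSup_subtype']
  have hle : ∀ α ∈ Sigmaplus, restrictedRootSpace L 𝔞 α ≤ 𝔫 := fun α hα => h𝔫 ▸ le_biSup _ hα
  have horth : ∀ α ∈ Sigmaplus, ∀ β ∈ Sigmaplus, ∀ x ∈ restrictedRootSpace L 𝔞 α,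
      ∀ y ∈ restrictedRootSpace L 𝔞 β, B x y = 0 := fun α hα β hβ x hx y hy => by
    by_cases hαβ : α + β = 0
    · rw [restrictedRootSpace_eq_bot_of_neg_le θ hθ hθ𝔞 h𝔫θ (hroots α hα) (hle α hα)
        (neg_eq_of_add_eq_zero_right hαβ ▸ hle β hβ)] at hx
      rw [(mem_bot ℝ).1 hx, map_zero, LinearMap.zero_apply]
    · exact apply_eq_zero_of_mem_restrictedRootSpace hBinv hαβ hx hy
  obtain ⟨n, m, hn, hm, hspan, hdual⟩ := exists_dual_families_of_pairwise_orthogonal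
    (isSymm_compl₁₂_id_sub θ hB) (fun α : Sigmaplus => restrictedRootSpace L 𝔞 α)
    (fun α β hαβ x hx y hy => apply_sub_eq_zero_of_mem_restrictedRootSpace hBinv θ hBθ hθ𝔞
      (Subtype.coe_injective.ne hαβ) hx hy (horth _ α.2 _ β.2 x hx y hy))
    (h𝔫' ▸ hnd)
  exact ⟨n, m, hn, hm, h𝔫' ▸ hspan, hdual⟩

theorem sum_bracket_dual_basis_eq_two_rho_general
    (L : Type) [LieRing L] [LieAlgebra ℝ L] [Module.Finite ℝ L]
    (c : ℝ) (B : LinearMap.BilinForm ℝ L) (hB : B = c • killingForm ℝ L)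
    (θ : L →ₗ⁅ℝ⁆ L) (hθ : ∀ x, θ (θ x) = x)
    (𝔨 𝔭 𝔞 𝔫 : Submodule ℝ L)
    (h𝔨 : ∀ x : L, x ∈ 𝔨 ↔ θ x = x) (h𝔭 : ∀ x : L, x ∈ 𝔭 ↔ θ x = -x)
    (h𝔞𝔭 : 𝔞 ≤ 𝔭)
    (h𝔞max : ∀ x ∈ 𝔭, (∀ y ∈ 𝔞, ⁅x, y⁆ = (0 : L)) → x ∈ 𝔞)
    (Sigmaplus : Finset (↥𝔞 →ₗ[ℝ] ℝ))
    (hroots : ∀ α ∈ Sigmaplus, α ≠ 0)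
    (h𝔫 : 𝔫 = ⨆ α ∈ Sigmaplus, restrictedRootSpace L 𝔞 α)
    (hdisj₁ : ∀ x ∈ 𝔨, x ∈ 𝔞 ⊔ 𝔫 → x = 0)
    (κ : L →ₗ[ℝ] L) (hκ𝔨 : ∀ x : L, κ x ∈ 𝔨) (hκrest : ∀ x : L, x - κ x ∈ 𝔞 ⊔ 𝔫)
    (d : ℕ) (X Xt : Fin d → L)
    (hXt : ∀ j, Xt j ∈ 𝔭 ⊓ (𝔨 ⊔ 𝔫))
    (hXspan : Submodule.span ℝ (Set.range X) = 𝔭 ⊓ (𝔨 ⊔ 𝔫))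
    (hdual : ∀ i j, B (Xt i) (X j) = if i = j then (1 : ℝ) else 0) :
    (∑ j, ⁅Xt j, κ (X j)⁆) ∈ 𝔞 ∧
      ∀ H : ↥𝔞, B (∑ j, ⁅Xt j, κ (X j)⁆) (H : L)
        = 2 * ((1 / 2) * ∑ α ∈ Sigmaplus,
            (Module.finrank ℝ ↥(restrictedRootSpace L 𝔞 α) : ℝ) * α H) := by
  classical
  have hBsymm : B.IsSymm := ⟨fun x y => by simp [hB, LieModule.traceForm_comm ℝ L L x y]⟩
  have hBinv : ∀ x y z, B ⁅x, y⁆ z = B x ⁅y, z⁆ := by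
    simp [hB, LieModule.traceForm_apply_lie_apply]
  have hBθ : ∀ x y, B (θ x) (θ y) = B x y := by
    simp [hB, killingForm_apply_apply_of_involutive θ hθ]
  have hθ𝔞 : ∀ H ∈ 𝔞, θ H = -H := fun H hH => (h𝔭 H).1 (h𝔞𝔭 hH)
  have h𝔫θ : ∀ x ∈ 𝔫, θ x = x → x = 0 := fun x hx h => hdisj₁ x ((h𝔨 x).2 h) (mem_sup_right hx)
  have hXt' : ∀ i, Xt i ∈ span ℝ (range X) := fun i => hXspan ▸ hXt i
  obtain ⟨n, m, hn, hm, hspan, hdual'⟩ := exists_dual_families_restrictedRootSpace hBsymm hBinv θ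
    hθ hBθ hθ𝔞 h𝔫θ Sigmaplus hroots h𝔫 fun x hx =>
      eq_zero_of_forall_apply_sub_eq_zero θ hθ h𝔨 h𝔭 h𝔫θ hBsymm hXspan hXt' hdual hx
  have hm𝔫 : ∀ k, m k ∈ 𝔫 := fun k => h𝔫 ▸ le_biSup (restrictedRootSpace L 𝔞) k.1.2 (hm k)
  have hS := sum_lie_dual_eq_sum_lie_sub θ hθ h𝔨 h𝔭 le_sup_right hdisj₁ κ hκ𝔨 hκrest hBsymm
    hXspan hXt' hdual hspan hm𝔫 hdual'
  refine ⟨hS ▸ sum_lie_sub_neg_add_mem θ hBsymm hθ h𝔭 hθ𝔞 h𝔞max (fun k => k.1) hm hn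
    (fun k => hspan ▸ hm𝔫 k) hdual', fun H => ?_⟩
  rw [hS, apply_sum_lie_sub_neg_add θ hBinv hθ𝔞 (fun k => k.1) hn
    (fun k => by simpa using hdual' k k), Fintype.sum_sigma,
    ← sum_coe_sort Sigmaplus (fun α => (finrank ℝ (restrictedRootSpace L 𝔞 α) : ℝ) * α H)]
  simp

/-- Let `𝔤₀` be a real semisimple Lie algebra with Cartan involution `θ`, Cartan
decomposition `𝔤₀ = 𝔨₀ ⊕ 𝔭₀`, Iwasawa data `𝔞₀, 𝔫₀` with restricted roots `Σ⁺`,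
and `B` a positive multiple of the Killing form.  If `X₁,…,X_d` is a basis of
`𝔭₀ ∩ (𝔨₀ ⊕ 𝔫₀)` with `B`-dual basis `X̃₁,…,X̃_d`, then `∑ⱼ [X̃ⱼ, κ(Xⱼ)] ∈ 𝔞₀`
and `B(∑ⱼ [X̃ⱼ, κ(Xⱼ)], H) = 2ρ(H)` for all `H ∈ 𝔞₀`, where `κ` is the
`𝔨₀`-component in `𝔤₀ = 𝔨₀ ⊕ 𝔞₀ ⊕ 𝔫₀` and `ρ = ½ ∑_{α ∈ Σ⁺} dim(𝔤^α)·α`. -/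
theorem sum_bracket_dual_basis_eq_two_rho
    (L : Type) [LieRing L] [LieAlgebra ℝ L] [Module.Finite ℝ L]
    [LieAlgebra.IsSemisimple ℝ L]
    (c : ℝ) (hc : 0 < c) (B : LinearMap.BilinForm ℝ L) (hB : B = c • killingForm ℝ L)
    (θ : L →ₗ⁅ℝ⁆ L) (hθ : ∀ x, θ (θ x) = x)
    (𝔨 𝔭 𝔞 𝔫 : Submodule ℝ L)
    (h𝔨 : ∀ x : L, x ∈ 𝔨 ↔ θ x = x) (h𝔭 : ∀ x : L, x ∈ 𝔭 ↔ θ x = -x)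
    (h𝔞𝔭 : 𝔞 ≤ 𝔭)
    (h𝔞ab : ∀ x ∈ 𝔞, ∀ y ∈ 𝔞, ⁅x, y⁆ = (0 : L))
    (h𝔞max : ∀ x ∈ 𝔭, (∀ y ∈ 𝔞, ⁅x, y⁆ = (0 : L)) → x ∈ 𝔞)
    (Sigmaplus : Finset (↥𝔞 →ₗ[ℝ] ℝ))
    (hroots : ∀ α ∈ Sigmaplus, α ≠ 0)
    (h𝔫 : 𝔫 = ⨆ α ∈ Sigmaplus, restrictedRootSpace L 𝔞 α)
    (hIwasawa : 𝔨 ⊔ 𝔞 ⊔ 𝔫 = ⊤)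
    (hdisj₁ : ∀ x ∈ 𝔨, x ∈ 𝔞 ⊔ 𝔫 → x = 0)
    (hdisj₂ : 𝔞 ⊓ 𝔫 = ⊥)
    (κ : L →ₗ[ℝ] L) (hκ𝔨 : ∀ x : L, κ x ∈ 𝔨) (hκrest : ∀ x : L, x - κ x ∈ 𝔞 ⊔ 𝔫)
    (d : ℕ) (X Xt : Fin d → L)
    (hX : ∀ j, X j ∈ 𝔭 ⊓ (𝔨 ⊔ 𝔫)) (hXt : ∀ j, Xt j ∈ 𝔭 ⊓ (𝔨 ⊔ 𝔫))
    (hXindep : LinearIndependent ℝ X)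
    (hXspan : Submodule.span ℝ (Set.range X) = 𝔭 ⊓ (𝔨 ⊔ 𝔫))
    (hdual : ∀ i j, B (Xt i) (X j) = if i = j then (1 : ℝ) else 0) :
    (∑ j, ⁅Xt j, κ (X j)⁆) ∈ 𝔞 ∧
      ∀ H : ↥𝔞, B (∑ j, ⁅Xt j, κ (X j)⁆) (H : L)
        = 2 * ((1 / 2) * ∑ α ∈ Sigmaplus,
            (Module.finrank ℝ ↥(restrictedRootSpace L 𝔞 α) : ℝ) * α H) :=
  sum_bracket_dual_basis_eq_two_rho_general L c B hB θ hθ 𝔨 𝔭 𝔞 𝔫 h𝔨 h𝔭 h𝔞𝔭 h𝔞max Sigmaplus hroots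
    h𝔫 hdisj₁ κ hκ𝔨 hκrest d X Xt hXt hXspan hdual
end

section
/- Let h_{p,q}(ξ) = cos^{p+q}(ξ)·F(−p, −q, n−1, −tan²(ξ)) and φ_{p,q}(ξ,ϕ) = e^{i(p−q)ϕ} h_{p,q}(ξ) be the M-spherical function of the U(n)-representation Y_{p,q} on S^{2n-1}. Then 2(p+q+n−1)·cos(ξ)cos(ϕ)·φ_{p,q} = (p+n−1)·φ_{p+1,q} + q·φ_{p,q−1} + (q+n−1)·φ_{p,q+1} + p·φ_{p−1,q}. -/
/-!
Write `φ_{p,q} = e^{i(p-q)ϕ} h_{p,q}(ξ)` and `2 cos ϕ = e^{iϕ} + e^{-iϕ}`: the recursion splits into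
the two three-term relations for `cos ξ · h_{p,q}`, and since `h_{p,q} = h_{q,p}` the second is the
first with `p` and `q` exchanged. The first is Gauss' contiguous relation
`(c-a-b) F(a,b) = (c-a) F(a-1,b) - b (1-x) F(a,b+1)` at `a = -p`, `b = -q-1`, `c = n-1`,
`x = -tan² ξ`, multiplied by `cos^{p+q+2} ξ` and using `cos² ξ · (1 - x) = 1`. For a terminating
series the contiguous relation is a finite telescoping of the same relation between coefficients.
-/

/-- The Gauss hypergeometric series `F(a,b,c,z) = ∑ (a)ₙ(b)ₙ/(c)ₙ · zⁿ/n!`,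
where `(q)ₙ = q(q+1)⋯(q+n-1)` is the Pochhammer symbol. -/
noncomputable def hypF (a b c z : ℝ) : ℝ :=
  ∑' n : ℕ,
    ((∏ i ∈ Finset.range n, (a + (i : ℝ))) * (∏ i ∈ Finset.range n, (b + (i : ℝ))) /
      (∏ i ∈ Finset.range n, (c + (i : ℝ)))) * z ^ n / (n.factorial : ℝ)

/-- The `M`-spherical function of the `U(n)`-type `Y_{p,q}` on `S^{2n-1}` in angular
coordinates: `φ_{p,q}(ξ,ϕ) = e^{i(p-q)ϕ}·cos^{p+q}(ξ)·F(-p, -q, n-1, -tan²ξ)`. -/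
noncomputable def sphericalSU (n p q : ℕ) (ξ ϕ : ℝ) : ℂ :=
  Complex.exp (Complex.I * (((p : ℝ) - (q : ℝ) : ℝ) : ℂ) * (ϕ : ℂ)) *
    ((Real.cos ξ ^ (p + q) *
      hypF (-(p : ℝ)) (-(q : ℝ)) ((n : ℝ) - 1) (-(Real.tan ξ) ^ 2) : ℝ) : ℂ)

open Finset Polynomial

theorem ascPochhammer_eval_eq_prod_range {R : Type*} [CommSemiring R] (k : ℕ) (a : R) :
    (ascPochhammer R k).eval a = ∏ i ∈ range k, (a + i) := by
  induction k with
  | zero => simp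
  | succ k ih => rw [ascPochhammer_succ_eval, ih, prod_range_succ]

noncomputable def hypTerm (a b c x : ℝ) (k : ℕ) : ℝ :=
  (ascPochhammer ℝ k).eval a * (ascPochhammer ℝ k).eval b / (ascPochhammer ℝ k).eval c *
    x ^ k / k.factorial

theorem hypF_eq_tsum_hypTerm (a b c x : ℝ) : hypF a b c x = ∑' k, hypTerm a b c x k := by
  simp only [hypF, hypTerm, ascPochhammer_eval_eq_prod_range]

@[simp]
theorem hypTerm_zero (a b c x : ℝ) : hypTerm a b c x 0 = 1 := by
  simp [hypTerm]

theorem hypTerm_neg_natCast_of_lt {p k : ℕ} (b c x : ℝ) (h : p < k) :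
    hypTerm (-p) b c x k = 0 := by
  simp [hypTerm, ascPochhammer_eval_neg_coe_nat_of_lt h]

theorem hypF_neg_natCast_eq_sum {p N : ℕ} (b c x : ℝ) (hN : p < N) :
    hypF (-p) b c x = ∑ k ∈ range N, hypTerm (-p) b c x k := by
  rw [hypF_eq_tsum_hypTerm]
  exact tsum_eq_sum fun k hk => hypTerm_neg_natCast_of_lt b c x (hN.trans_le (by simpa using hk))

theorem hypF_comm (a b c x : ℝ) : hypF a b c x = hypF b a c x := by
  simp only [hypF, mul_comm (∏ i ∈ range _, (a + (i : ℝ)))]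

theorem hypF_snd_zero (a c x : ℝ) : hypF a 0 c x = 1 := by
  rw [← neg_zero, ← Nat.cast_zero, hypF_comm, hypF_neg_natCast_eq_sum a c x zero_lt_one]
  simp

theorem hypTerm_contiguous (a b c x : ℝ) (m : ℕ) (hc : (ascPochhammer ℝ (m + 1)).eval c ≠ 0) :
    (c - a - b) * hypTerm a b c x (m + 1)
      = (c - a) * hypTerm (a - 1) b c x (m + 1) - b * hypTerm a (b + 1) c x (m + 1)
        + b * x * hypTerm a (b + 1) c x m := by
  have shift_left (y : ℝ) : (ascPochhammer ℝ (m + 1)).eval (y - 1)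
      = (y - 1) * (ascPochhammer ℝ m).eval y := by
    simp [ascPochhammer_succ_left, eval_comp]
  rw [ascPochhammer_succ_eval, mul_ne_zero_iff] at hc
  have hb : (ascPochhammer ℝ (m + 1)).eval b = b * (ascPochhammer ℝ m).eval (b + 1) := by
    simpa using shift_left (b + 1)
  simp only [hypTerm, shift_left, hb, ascPochhammer_succ_eval, Nat.factorial_succ, pow_succ]
  have : ((m : ℝ) + 1) ≠ 0 := by positivity
  field_simp [hc.1, hc.2]
  push_cast
  ring

theorem hypF_contiguous (p : ℕ) (b : ℝ) {c : ℝ} (hc : ∀ k : ℕ, c + k ≠ 0) (x : ℝ) :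
    (c + p - b) * hypF (-p) b c x
      = (c + p) * hypF (-p - 1) b c x - b * (1 - x) * hypF (-p) (b + 1) c x := by
  have hpred : -(p : ℝ) - 1 = -((p + 1 : ℕ) : ℝ) := by push_cast; ring
  have hN : p < p + 2 := by omega
  rw [hypF_neg_natCast_eq_sum b c x hN, hypF_neg_natCast_eq_sum (b + 1) c x hN, hpred,
    hypF_neg_natCast_eq_sum b c x (lt_add_one (p + 1)), ← hpred]
  set A := hypTerm (-p) b c x
  set B := hypTerm (-p - 1) b c x
  set C := hypTerm (-p) (b + 1) c x
  have hstep (m : ℕ) :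
      (c + p - b) * A (m + 1) = (c + p) * B (m + 1) - b * C (m + 1) + b * x * C m := by
    have hcm : (ascPochhammer ℝ (m + 1)).eval c ≠ 0 := by
      rw [ascPochhammer_eval_eq_prod_range, prod_ne_zero_iff]
      exact fun k _ => hc k
    simpa [sub_neg_eq_add] using hypTerm_contiguous (-p) b c x m hcm
  have hsum := sum_congr rfl fun m (_ : m ∈ range (p + 1)) => hstep m
  rw [sum_add_distrib, sum_sub_distrib, ← mul_sum, ← mul_sum, ← mul_sum, ← mul_sum] at hsum
  have hC : C (p + 1) = 0 := hypTerm_neg_natCast_of_lt _ _ _ (Nat.lt_succ_self p)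
  have eC := sum_range_succ C (p + 1)
  rw [hC, add_zero] at eC
  linear_combination (norm := skip) hsum + (c + p - b) * sum_range_succ' A (p + 1)
    - (c + p) * sum_range_succ' B (p + 1) + b * sum_range_succ' C (p + 1) - b * x * eC
  simp only [A, B, C, hypTerm_zero]
  ring

noncomputable def sphericalRadial (n p q : ℕ) (ξ : ℝ) : ℝ :=
  Real.cos ξ ^ (p + q) * hypF (-(p : ℝ)) (-(q : ℝ)) ((n : ℝ) - 1) (-(Real.tan ξ) ^ 2)

theorem sphericalRadial_comm (n p q : ℕ) (ξ : ℝ) :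
    sphericalRadial n p q ξ = sphericalRadial n q p ξ := by
  rw [sphericalRadial, sphericalRadial, hypF_comm, add_comm]

theorem cos_mul_sphericalRadial_eq_fst {n : ℕ} (hn : 2 ≤ n) (p q : ℕ) {ξ : ℝ}
    (hξ : Real.cos ξ ≠ 0) :
    ((p : ℝ) + q + n - 1) * (Real.cos ξ * sphericalRadial n p q ξ)
      = ((p : ℝ) + n - 1) * sphericalRadial n (p + 1) q ξ
        + q * sphericalRadial n p (q - 1) ξ := by
  rcases q with _ | q
  · simp only [sphericalRadial, CharP.cast_eq_zero, neg_zero, hypF_snd_zero]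
    ring
  have hc (k : ℕ) : (n : ℝ) - 1 + k ≠ 0 := by
    have : (2 : ℝ) ≤ n := by exact_mod_cast hn
    linarith [k.cast_nonneg (α := ℝ)]
  have hcos_sq : Real.cos ξ ^ 2 * (1 - -Real.tan ξ ^ 2) = 1 := by
    rw [sub_neg_eq_add, ← Real.inv_one_add_tan_sq hξ, inv_mul_cancel₀]
    positivity
  have hF := hypF_contiguous p (-(q + 1)) hc (-Real.tan ξ ^ 2)
  simp only [sphericalRadial, Nat.add_sub_cancel]
  push_cast at hF ⊢
  rw [show -((q : ℝ) + 1) + 1 = -q by ring, show -(p : ℝ) - 1 = -(p + 1) by ring] at hF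
  linear_combination Real.cos ξ ^ (p + q + 2) * hF
    + (q + 1) * Real.cos ξ ^ (p + q) * hypF (-p) (-q) (n - 1) (-Real.tan ξ ^ 2) * hcos_sq

theorem cos_mul_sphericalRadial_eq_snd {n : ℕ} (hn : 2 ≤ n) (p q : ℕ) {ξ : ℝ}
    (hξ : Real.cos ξ ≠ 0) :
    ((p : ℝ) + q + n - 1) * (Real.cos ξ * sphericalRadial n p q ξ)
      = ((q : ℝ) + n - 1) * sphericalRadial n p (q + 1) ξ
        + p * sphericalRadial n (p - 1) q ξ := by
  rw [sphericalRadial_comm n p q, sphericalRadial_comm n p (q + 1),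
    sphericalRadial_comm n (p - 1) q]
  linear_combination cos_mul_sphericalRadial_eq_fst hn q p hξ

section

open Complex

theorem sphericalSU_eq_exp_mul (n p q : ℕ) (ξ ϕ : ℝ) :
    sphericalSU n p q ξ ϕ = exp (((p : ℂ) - q) * ϕ * I) * sphericalRadial n p q ξ := by
  rw [sphericalSU, sphericalRadial]
  push_cast
  ring_nf

theorem natCast_mul_sphericalSU_pred_snd (n p q : ℕ) (ξ ϕ : ℝ) :
    (q : ℂ) * sphericalSU n p (q - 1) ξ ϕ
      = q * (exp (((p : ℂ) + 1 - q) * ϕ * I) * sphericalRadial n p (q - 1) ξ) := by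
  rcases q with _ | q
  · simp
  · rw [sphericalSU_eq_exp_mul]
    push_cast
    ring_nf

theorem natCast_mul_sphericalSU_pred_fst (n p q : ℕ) (ξ ϕ : ℝ) :
    (p : ℂ) * sphericalSU n (p - 1) q ξ ϕ
      = p * (exp (((p : ℂ) - (q + 1)) * ϕ * I) * sphericalRadial n (p - 1) q ξ) := by
  rcases p with _ | p
  · simp
  · rw [sphericalSU_eq_exp_mul]
    push_cast
    ring_nf

end

/-- Recursion for the spherical functions of `SU(n,1)`, `n ≥ 2`:
`2(p+q+n-1)·cos ξ cos ϕ·φ_{p,q} = (p+n-1)·φ_{p+1,q} + q·φ_{p,q-1}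
   + (q+n-1)·φ_{p,q+1} + p·φ_{p-1,q}`. -/
theorem sphericalSU_recursion (n : ℕ) (hn : 2 ≤ n) :
    ∀ (p q : ℕ) (ξ ϕ : ℝ), Real.cos ξ ≠ 0 →
      2 * ((p : ℂ) + q + n - 1) * ((Real.cos ξ : ℝ) : ℂ) * ((Real.cos ϕ : ℝ) : ℂ) *
          sphericalSU n p q ξ ϕ
        = ((p : ℂ) + n - 1) * sphericalSU n (p + 1) q ξ ϕ
          + (q : ℂ) * sphericalSU n p (q - 1) ξ ϕ
          + ((q : ℂ) + n - 1) * sphericalSU n p (q + 1) ξ ϕ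
          + (p : ℂ) * sphericalSU n (p - 1) q ξ ϕ := by
  intro p q ξ ϕ hξ
  have hfst := congrArg Complex.ofReal (cos_mul_sphericalRadial_eq_fst hn p q hξ)
  have hsnd := congrArg Complex.ofReal (cos_mul_sphericalRadial_eq_snd hn p q hξ)
  set E := Complex.exp (((p : ℂ) - q) * ϕ * Complex.I)
  have hup : Complex.exp (((p : ℂ) + 1 - q) * ϕ * Complex.I)
      = E * Complex.exp (ϕ * Complex.I) := by
    rw [← Complex.exp_add]; ring_nf
  have hdown : Complex.exp (((p : ℂ) - (q + 1)) * ϕ * Complex.I)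
      = E * Complex.exp (-ϕ * Complex.I) := by
    rw [← Complex.exp_add]; ring_nf
  rw [natCast_mul_sphericalSU_pred_snd, natCast_mul_sphericalSU_pred_fst, sphericalSU_eq_exp_mul,
    sphericalSU_eq_exp_mul, sphericalSU_eq_exp_mul]
  push_cast at hfst hsnd ⊢
  rw [hup, hdown]
  linear_combination E * Complex.exp (ϕ * Complex.I) * hfst
    + E * Complex.exp (-ϕ * Complex.I) * hsnd
    + (p + q + n - 1) * Complex.cos ξ * E * sphericalRadial n p q ξ * Complex.two_cos ϕ
end
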